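/- arXiv:2411.19188 — 2 statements merged into one kernel-verified Lean document; each statement's English description precedes it below -/
import Mathlib

section
/- Let T be a proper binary tree with saturated vertices u and w such that R_T(u) = R_T(w). Let u_1, w_1 be the respective siblings of u and w, u_0, w_0 their respective parents, assume u_0 is an ancestor of w_0, and let w_p be the parent of w_0. Suppose R_T(w_1) < R_T(u) = R_T(w), u_0 is not the root of T, u_0 v_1 v_2 ⋯ v_t is the path in T from u_0 to the root v_t, and R_T(v_i) > R_T(w_1) for all 1 ≤ i ≤ t. Then the tree T* obtained from T by deleting the edges w_0w and w_pw_0 and adding the edges w_0v_t and w_pw (so that w_0 becomes the new root, with children w_1 and v_t) satisfies R(T*) ≥ R(T). -/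
/-- Proper binary trees: every internal vertex has exactly two children. -/
inductive BTree : Type
  | leaf : BTree
  | node : BTree → BTree → BTree
  deriving DecidableEq

namespace BTree

/-- The rank (protection number) of the root of a proper binary tree:
the minimum distance from the root to a leaf descendant. -/
def rank : BTree → ℕ
  | leaf => 0
  | node l r => min l.rank r.rank + 1

/-- The security of a proper binary tree: the sum of the ranks of all vertices. -/
def security : BTree → ℕ
  | leaf => 0
  | node l r => (node l r).rank + l.security + r.security

/-- The number of leaves. -/
def leafCount : BTree → ℕ
  | leaf => 1
  | node l r => l.leafCount + r.leafCount

/-- The height: maximum distance from the root to a leaf. -/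
def height : BTree → ℕ
  | leaf => 0
  | node l r => max l.height r.height + 1

/-- A tree is complete if all leaves are at the same depth. -/
def IsComplete : BTree → Prop
  | leaf => True
  | node l r => IsComplete l ∧ IsComplete r ∧ l.height = r.height

/-- The subtree at a given position (a list of directions from the root;
`false` = first child, `true` = second child), if the position exists. -/
def subtreeAt : BTree → List Bool → Option BTree
  | t, [] => some t
  | leaf, _ :: _ => none
  | node l _, false :: p => subtreeAt l p
  | node _ r, true :: p => subtreeAt r p

/-- Replace the subtree at a given position by `s`. -/
def replaceAt : BTree → List Bool → BTree → BTree
  | _, [], s => s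
  | leaf, _ :: _, _ => leaf
  | node l r, false :: p, s => node (replaceAt l p s) r
  | node l r, true :: p, s => node l (replaceAt r p s)

/-- The rank of the vertex at position `p` in `T` (rank of a vertex only depends
on the subtree consisting of the vertex and its descendants). -/
def rankAt (T : BTree) (p : List Bool) : ℕ := ((T.subtreeAt p).map rank).getD 0

/-- The vertex at position `p` in `T` is saturated: its subtree is complete, but the
subtree of none of its (proper) ancestors is complete. -/
def Saturated (T : BTree) (p : List Bool) : Prop :=
  (∃ s, T.subtreeAt p = some s ∧ IsComplete s) ∧
  ∀ q s, q <+: p → q ≠ p → T.subtreeAt q = some s → ¬ IsComplete s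

/-- The complete binary tree of height `m` (with `2 ^ m` leaves). -/
def completeTree : ℕ → BTree
  | 0 => leaf
  | m + 1 => node (completeTree m) (completeTree m)

/-- The tree `T_L` for `L = (n₁, …, n_k)`: a binary caterpillar whose spine vertices carry
complete binary trees with `2 ^ nᵢ` leaves. -/
def TL : List ℕ → BTree
  | [] => leaf
  | n :: ns => ns.foldl (fun acc m => node acc (completeTree m)) (completeTree n)

/-- Helper for the almost complete tree: a complete binary tree of height `m`
whose leftmost `r` leaves each receive two leaf children. -/
def buildF : ℕ → ℕ → BTree
  | 0, r => if r = 0 then leaf else node leaf leaf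
  | m + 1, r => node (buildF m (min r (2 ^ m))) (buildF m (r - 2 ^ m))

/-- The almost complete ("good") tree `F(ℓ)` on `ℓ` leaves. -/
def F (ℓ : ℕ) : BTree := buildF (Nat.log 2 ℓ) (ℓ - 2 ^ Nat.log 2 ℓ)

theorem subtreeAt_append (p q : List Bool) : ∀ T : BTree,
    T.subtreeAt (p ++ q) = (T.subtreeAt p).bind (·.subtreeAt q) := by
  induction p with
  | nil => intro T; simp [subtreeAt]
  | cons d p ih =>
    intro T
    cases T with
    | leaf => simp [subtreeAt]
    | node l r => cases d <;> simp [subtreeAt, ih]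

theorem rank_replaceAt_le (p : List Bool) : ∀ (T S s : BTree),
    T.subtreeAt p = some S → S.rank ≤ s.rank → T.rank ≤ (T.replaceAt p s).rank := by
  induction p with
  | nil =>
    intro T S s h hle
    simp [subtreeAt] at h
    subst h
    simpa [replaceAt] using hle
  | cons d p ih =>
    intro T S s h hle
    cases T with
    | leaf => simp [subtreeAt] at h
    | node l r =>
      cases d
      · simp [subtreeAt] at h
        have := ih l S s h hle
        simp only [replaceAt, rank]
        omega
      · simp [subtreeAt] at h
        have := ih r S s h hle
        simp only [replaceAt, rank]
        omega

theorem security_replaceAt_le (p : List Bool) : ∀ (T S s : BTree),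
    T.subtreeAt p = some S → S.rank ≤ s.rank →
    T.security + s.security ≤ (T.replaceAt p s).security + S.security := by
  induction p with
  | nil =>
    intro T S s h _
    simp [subtreeAt] at h
    subst h
    simp [replaceAt]
    omega
  | cons d p ih =>
    intro T S s h hle
    cases T with
    | leaf => simp [subtreeAt] at h
    | node l r =>
      cases d
      · simp [subtreeAt] at h
        have h1 := ih l S s h hle
        have h2 := rank_replaceAt_le p l S s h hle
        simp only [replaceAt, security, rank]
        omega
      · simp [subtreeAt] at h
        have h1 := ih r S s h hle
        have h2 := rank_replaceAt_le p r S s h hle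
        simp only [replaceAt, security, rank]
        omega

end BTree

open BTree in
/-- Switching lemma (Lemma sw4, case (2)): `u` (at position `pu0 ++ [du]`, parent `u₀` at
`pu0`) and `w` (at position `pw0 ++ [dw]`, parent `w₀` at `pw0`, sibling `w₁`) are saturated
vertices of equal rank, `u₀` is a proper ancestor of `w₀` and is not the root, and
`R_T(w₁) < R_T(u) = R_T(w)`.  The path from `u₀` to the root is `u₀ v₁ ⋯ v_t` (so `v_i` sits
at position `pu0.take (t − i)`, where `t = pu0.length`), and `R_T(v_i) > R_T(w₁)` for all
`1 ≤ i ≤ t`.  The tree `T*` is obtained by removing `w₀` (its child `w` takes its place as a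
child of `w_p`) and making `w₀` the new root, with children `w₁` and the old root `v_t`.
Then `R(T*) ≥ R(T)`. -/
theorem switching_lemma_four_case_two (T tu tw tu1 tw1 : BTree) (pu0 pw0 : List Bool)
    (du dw : Bool)
    (hu : T.subtreeAt (pu0 ++ [du]) = some tu)
    (hw : T.subtreeAt (pw0 ++ [dw]) = some tw)
    (hu1 : T.subtreeAt (pu0 ++ [!du]) = some tu1)
    (hw1 : T.subtreeAt (pw0 ++ [!dw]) = some tw1)
    (hsatu : Saturated T (pu0 ++ [du]))
    (hsatw : Saturated T (pw0 ++ [dw]))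
    (hrank : tu.rank = tw.rank)
    (hanc : pu0 <+: pw0) (hanc' : pu0 ≠ pw0)
    (hroot : pu0 ≠ [])
    (hsib : tw1.rank + 1 ≤ tu.rank)
    (hall : ∀ i, 1 ≤ i → i ≤ pu0.length → tw1.rank < T.rankAt (pu0.take (pu0.length - i))) :
    T.security ≤ (BTree.node (T.replaceAt pw0 tw) tw1).security := by
  -- identify the subtree S at pw0
  rw [subtreeAt_append] at hw hw1
  obtain ⟨S, hS, hSw⟩ : ∃ S, T.subtreeAt pw0 = some S ∧ S.subtreeAt [dw] = some tw := by
    cases h : T.subtreeAt pw0 with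
    | none => rw [h] at hw; simp at hw
    | some S => rw [h] at hw; exact ⟨S, rfl, hw⟩
  rw [hS] at hw1
  simp only [Option.bind_some] at hw1
  -- S is a node with children tw and tw1
  have hSfacts : S.rank = tw1.rank + 1 ∧
      S.security = S.rank + tw.security + tw1.security := by
    cases S with
    | leaf => cases dw <;> simp [subtreeAt] at hSw
    | node a b =>
      cases dw <;> simp [subtreeAt] at hSw hw1 <;> subst hSw <;> subst hw1 <;>
        constructor <;> simp [rank, security] <;> omega
  obtain ⟨hSrank, hSsec⟩ := hSfacts
  have hle : S.rank ≤ tw.rank := by omega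
  -- T.rank > tw1.rank, from hall at i = pu0.length
  have hlen : 1 ≤ pu0.length := by
    cases pu0 with
    | nil => exact absurd rfl hroot
    | cons a l => simp
  have hT : tw1.rank < T.rank := by
    have := hall pu0.length hlen le_rfl
    simpa [rankAt, subtreeAt] using this
  have hR := rank_replaceAt_le pw0 T S tw hS hle
  have hsec := security_replaceAt_le pw0 T S tw hS hle
  have hmin : min (T.replaceAt pw0 tw).rank tw1.rank = tw1.rank := by omega
  simp only [security, rank, hmin]
  omega
end

section
/- Let ℓ ≥ 2 have binary power representation L = (n_1, n_2, …, n_k) and let T_L be the corresponding maximal proper binary tree, where c_i denotes the root of the complete binary tree with 2^{n_i} leaves attached at v_i. If n_i = n_{i+1} + 1 for some fixed i with 2 ≤ i ≤ k−1, then R(T_L) = R(T*), where T* is obtained from T_L by deleting the edges v_{i+1}c_{i+1} and v_iv_{i−1} and adding the edges v_{i−1}v_{i+1} and v_ic_{i+1}. -/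
namespace BTree

lemma rank_completeTree (m : ℕ) : (completeTree m).rank = m := by
  induction m with
  | zero => rfl
  | succ n ih => simp [completeTree, rank, ih]

lemma security_node (l r : BTree) :
    (node l r).security = (min l.rank r.rank + 1) + l.security + r.security := rfl

lemma rank_foldl_ge (c : ℕ) (ns : List ℕ) : ∀ (t : BTree), c ≤ t.rank → (∀ m ∈ ns, c ≤ m) →
    c ≤ (ns.foldl (fun acc m => node acc (completeTree m)) t).rank := by
  induction ns with
  | nil => intro t ht _; exact ht
  | cons m ns ih =>
    intro t ht hm
    simp only [List.foldl_cons]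
    apply ih
    · have : (node t (completeTree m)).rank = min t.rank m + 1 := by
        simp [rank, rank_completeTree]
      rw [this]
      have := hm m (by simp)
      omega
    · intro x hx; exact hm x (by simp [hx])

lemma sec_foldl_eq (B : List ℕ) : B.Pairwise (· > ·) → ∀ (c : ℕ), (∀ m ∈ B, m < c) →
    ∀ X Y : BTree, X.security = Y.security → c ≤ X.rank → c ≤ Y.rank →
    (B.foldl (fun acc m => node acc (completeTree m)) X).security =
    (B.foldl (fun acc m => node acc (completeTree m)) Y).security := by
  induction B with
  | nil => intro _ _ _ X Y h _ _; exact h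
  | cons m B ih =>
    intro hp c hc X Y hsec hX hY
    have hmc : m < c := hc m (by simp)
    have hpc := List.pairwise_cons.mp hp
    simp only [List.foldl_cons]
    have hrX : (node X (completeTree m)).rank = m + 1 := by
      simp [rank, rank_completeTree]; omega
    have hrY : (node Y (completeTree m)).rank = m + 1 := by
      simp [rank, rank_completeTree]; omega
    apply ih hpc.2 (m + 1)
    · intro x hx; have := hpc.1 x hx; omega
    · rw [security_node, security_node]
      simp [rank_completeTree]
      omega
    · omega
    · omega

end BTree

open BTree in
/-- Proposition (flip (2)): let `ℓ ≥ 2` have binary power representation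
`L = (n₁, …, n_k)` and suppose `n_i = n_{i+1} + 1` for some `2 ≤ i ≤ k − 1`
(below, `A = (n₁, …, n_{i−1})` is nonempty, `a = n_i`, `b = n_{i+1}`, and `B` is the
rest).  In `T_L`, delete the edges `v_{i+1}c_{i+1}` and `v_iv_{i−1}` and add the edges
`v_{i−1}v_{i+1}` and `v_ic_{i+1}`: the resulting tree `T*` has `v_i` with children
`c_i, c_{i+1}` and `v_{i+1}` with children `v_{i−1}` (the root of `TL A`) and `v_i`.
The security is unchanged. -/
theorem security_rewire (ℓ a b : ℕ) (A B : List ℕ) (hℓ : 2 ≤ ℓ)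
    (hdec : (A ++ a :: b :: B).Chain' (· > ·))
    (hsum : ((A ++ a :: b :: B).map (2 ^ ·)).sum = ℓ)
    (hA : A ≠ []) (hab : a = b + 1) :
    (TL (A ++ a :: b :: B)).security =
      (B.foldl (fun acc m => BTree.node acc (completeTree m))
        (BTree.node (TL A) (BTree.node (completeTree a) (completeTree b)))).security := by
  obtain ⟨n, A', rfl⟩ : ∃ n A', A = n :: A' := by
    cases A with
    | nil => exact absurd rfl hA
    | cons n A' => exact ⟨n, A', rfl⟩
  have hpw : ((n :: A') ++ a :: b :: B).Pairwise (· > ·) :=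
    List.isChain_iff_pairwise.mp hdec
  rw [List.pairwise_append] at hpw
  obtain ⟨hApw, hrest, hcross⟩ := hpw
  have haA : ∀ m ∈ n :: A', a < m := fun m hm => hcross m hm a (by simp)
  have hBb : ∀ m ∈ B, m < b := by
    have := (List.pairwise_cons.mp (List.pairwise_cons.mp hrest).2).1
    intro m hm; exact this m hm
  have hBpw : B.Pairwise (· > ·) :=
    (List.pairwise_cons.mp (List.pairwise_cons.mp hrest).2).2
  -- rank of TL (n :: A') is at least a + 1
  have hr : a + 1 ≤ (TL (n :: A')).rank := by
    apply rank_foldl_ge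
    · rw [rank_completeTree]; exact haA n (by simp)
    · intro m hm; exact haA m (by simp [hm])
  -- Unfold LHS
  have hTL : TL ((n :: A') ++ a :: b :: B) =
      B.foldl (fun acc m => node acc (completeTree m))
        (node (node (TL (n :: A')) (completeTree a)) (completeTree b)) := by
    simp [TL, List.foldl_append]
  rw [hTL]
  apply sec_foldl_eq B hBpw (b + 1) (fun m hm => by have := hBb m hm; omega)
  · rw [security_node, security_node, security_node, security_node]
    simp only [rank, rank_completeTree]
    omega
  · simp only [rank, rank_completeTree]
    omega
  · simp only [rank, rank_completeTree]
    omega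
end
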